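/- Let p_{UV} be a pmf on a finite set U×V, let (U^n,V^n) ~ p_{UV}^{⊗n}, and suppose X^n = f(U^n) and Y^n = g(V^n) for functions f : U^n → X^n-alphabet and g : V^n → Y^n-alphabet such that the joint pmf of (X^n, Y^n) is exactly p_{XY}^{⊗n} for a pmf p_{XY} on X×Y, i.e. (X_1, Y_1, …, X_n, Y_n) is i.i.d. p_{XY}. Then, in the special case where both p_{UV} and p_{XY} are DSBS(p) with 0 < p < 1/2 on {0,1}, the maps f and g are both bijections of {0,1}^n and satisfy d_H( f(x^n), g(y^n) ) = d_H( x^n, y^n ) for all x^n, y^n ∈ {0,1}^n. -/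
import Mathlib


open Finset

/-- The pmf of one DSBS(p) pair on `{0,1}` (encoded by `Bool`). -/
noncomputable def dsbsPair (p : ℝ) (uv : Bool × Bool) : ℝ :=
  if uv.1 = uv.2 then (1 - p) / 2 else p / 2

lemma dsbs_comm (p : ℝ) (a b : Bool) : dsbsPair p (a, b) = dsbsPair p (b, a) := by
  cases a <;> cases b <;> simp [dsbsPair]

lemma sum_dsbs (p : ℝ) (a : Bool) : ∑ b : Bool, dsbsPair p (a, b) = 1 / 2 := by
  cases a <;> simp [dsbsPair] <;> ring

lemma sum_prod_dsbs (p : ℝ) {n : ℕ} (u : Fin n → Bool) :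
    ∑ v : Fin n → Bool, ∏ i, dsbsPair p (u i, v i) = (1 / 2) ^ n := by
  rw [show (univ : Finset (Fin n → Bool)) = Fintype.piFinset (fun _ => univ) from
    (Fintype.piFinset_univ).symm,
    ← Finset.prod_univ_sum (t := fun _ => (univ : Finset Bool))
      (f := fun i b => dsbsPair p (u i, b))]
  simp only [sum_dsbs]
  simp

lemma prod_dsbs (p : ℝ) {n : ℕ} (u v : Fin n → Bool) :
    ∏ i, dsbsPair p (u i, v i)
      = ((1 - p) / 2) ^ (n - hammingDist u v) * (p / 2) ^ hammingDist u v := by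
  unfold dsbsPair
  rw [Finset.prod_ite, Finset.prod_const, Finset.prod_const]
  have hd : (univ.filter fun i => ¬ u i = v i).card = hammingDist u v := rfl
  have hcard : (univ.filter fun i => u i = v i).card
      + (univ.filter fun i => ¬ u i = v i).card = n := by
    rw [Finset.card_filter_add_card_filter_not]; simp
  have h1 : (univ.filter fun i => u i = v i).card = n - hammingDist u v := by omega
  rw [h1, hd]

lemma w_lt {p : ℝ} (hp0 : 0 < p) (hp : p < 1 / 2) {n d d' : ℕ}
    (hdd : d < d') (hd' : d' ≤ n) :
    ((1 - p) / 2) ^ (n - d') * (p / 2) ^ d' < ((1 - p) / 2) ^ (n - d) * (p / 2) ^ d := by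
  have hq : (0:ℝ) < p / 2 := by linarith
  have hA : (0:ℝ) < (1 - p) / 2 := by linarith
  have hqA : p / 2 < (1 - p) / 2 := by linarith
  obtain ⟨k, hk, rfl⟩ : ∃ k, 0 < k ∧ d' = d + k := ⟨d' - d, by omega, by omega⟩
  have hpow : (p / 2) ^ k < ((1 - p) / 2) ^ k :=
    pow_lt_pow_left₀ hqA (le_of_lt hq) (by omega)
  calc ((1 - p) / 2) ^ (n - (d + k)) * (p / 2) ^ (d + k)
      = ((1 - p) / 2) ^ (n - (d + k)) * (p / 2) ^ d * (p / 2) ^ k := by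
        rw [pow_add]; ring
    _ < ((1 - p) / 2) ^ (n - (d + k)) * (p / 2) ^ d * ((1 - p) / 2) ^ k := by
        apply mul_lt_mul_of_pos_left hpow (by positivity)
    _ = ((1 - p) / 2) ^ (n - d) * (p / 2) ^ d := by
        rw [show n - d = (n - (d + k)) + k by omega, pow_add]; ring

lemma w_inj {p : ℝ} (hp0 : 0 < p) (hp : p < 1 / 2) {n d d' : ℕ}
    (hd : d ≤ n) (hd' : d' ≤ n)
    (hw : ((1 - p) / 2) ^ (n - d) * (p / 2) ^ d
        = ((1 - p) / 2) ^ (n - d') * (p / 2) ^ d') : d = d' := by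
  rcases lt_trichotomy d d' with h | h | h
  · exact absurd hw (ne_of_gt (w_lt hp0 hp h hd'))
  · exact h
  · exact absurd hw (ne_of_lt (w_lt hp0 hp h hd))

lemma sum_indic_one_bijective {n : ℕ} (F : (Fin n → Bool) → (Fin n → Bool))
    (hF : ∀ x, ∑ u : Fin n → Bool, (if F u = x then (1:ℝ) else 0) = 1) :
    Function.Bijective F := by
  rw [Function.bijective_iff_existsUnique]
  intro x
  have h1 := hF x
  rw [Finset.sum_boole] at h1
  have hc : (univ.filter fun u => F u = x).card = 1 := by exact_mod_cast h1
  obtain ⟨a, ha⟩ := Finset.card_eq_one.mp hc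
  refine ⟨a, ?_, ?_⟩
  · have : a ∈ univ.filter fun u => F u = x := ha ▸ Finset.mem_singleton_self a
    simpa using this
  · intro b hb
    have hbmem : b ∈ univ.filter fun u => F u = x := by simp [hb]
    rw [ha, Finset.mem_singleton] at hbmem
    exact hbmem

/-- if `X^n = f(U^n)`, `Y^n = g(V^n)` have joint law exactly
`DSBS(p)^{⊗n}` when `(U^n,V^n) ~ DSBS(p)^{⊗n}` with `0 < p < 1/2`, then `f` and `g`
are bijections of the Hamming cube and `d_H(f(x^n), g(y^n)) = d_H(x^n, y^n)` for all
`x^n, y^n`. -/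
theorem stmt16 (p : ℝ) (hp0 : 0 < p) (hp : p < 1 / 2) (n : ℕ)
    (f g : (Fin n → Bool) → (Fin n → Bool))
    (h : ∀ x y : Fin n → Bool,
      (∑ u : Fin n → Bool, ∑ v : Fin n → Bool,
          (∏ i, dsbsPair p (u i, v i)) * (if f u = x then (1:ℝ) else 0) *
            (if g v = y then (1:ℝ) else 0))
        = ∏ i, dsbsPair p (x i, y i)) :
    Function.Bijective f ∧ Function.Bijective g ∧
      ∀ x y : Fin n → Bool, hammingDist (f x) (g y) = hammingDist x y := by
  have hpow_ne : ((1/2:ℝ)) ^ n ≠ 0 := pow_ne_zero n (by norm_num)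
  -- fibers of f have mass 1
  have hf1 : ∀ x : Fin n → Bool, ∑ u : Fin n → Bool, (if f u = x then (1:ℝ) else 0) = 1 := by
    intro x
    have H : ∑ y : Fin n → Bool, ∑ u : Fin n → Bool, ∑ v : Fin n → Bool,
        (∏ i, dsbsPair p (u i, v i)) * (if f u = x then (1:ℝ) else 0) *
          (if g v = y then (1:ℝ) else 0)
        = ∑ y : Fin n → Bool, ∏ i, dsbsPair p (x i, y i) :=
      Finset.sum_congr rfl fun y _ => h x y
    rw [sum_prod_dsbs, Finset.sum_comm] at H
    have H2 : ∀ u : Fin n → Bool,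
        (∑ y : Fin n → Bool, ∑ v : Fin n → Bool,
          (∏ i, dsbsPair p (u i, v i)) * (if f u = x then (1:ℝ) else 0) *
            (if g v = y then (1:ℝ) else 0))
        = (1/2:ℝ)^n * (if f u = x then (1:ℝ) else 0) := by
      intro u
      rw [Finset.sum_comm]
      have e : ∀ v : Fin n → Bool,
          (∑ y : Fin n → Bool,
            (∏ i, dsbsPair p (u i, v i)) * (if f u = x then (1:ℝ) else 0) *
              (if g v = y then (1:ℝ) else 0))
          = (∏ i, dsbsPair p (u i, v i)) * (if f u = x then (1:ℝ) else 0) := by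
        intro v
        rw [← Finset.mul_sum]
        simp
      simp_rw [e]
      rw [← Finset.sum_mul, sum_prod_dsbs]
    simp_rw [H2] at H
    rw [← Finset.mul_sum] at H
    have := mul_left_cancel₀ hpow_ne (H.trans (mul_one ((1/2:ℝ)^n)).symm)
    exact this
  -- fibers of g have mass 1
  have hg1 : ∀ y : Fin n → Bool, ∑ v : Fin n → Bool, (if g v = y then (1:ℝ) else 0) = 1 := by
    intro y
    have H : ∑ x : Fin n → Bool, ∑ u : Fin n → Bool, ∑ v : Fin n → Bool,
        (∏ i, dsbsPair p (u i, v i)) * (if f u = x then (1:ℝ) else 0) *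
          (if g v = y then (1:ℝ) else 0)
        = ∑ x : Fin n → Bool, ∏ i, dsbsPair p (x i, y i) :=
      Finset.sum_congr rfl fun x _ => h x y
    have hRHS : ∑ x : Fin n → Bool, ∏ i, dsbsPair p (x i, y i) = (1/2:ℝ)^n := by
      simp_rw [fun (x : Fin n → Bool) (i : Fin n) => dsbs_comm p (x i) (y i)]
      exact sum_prod_dsbs p y
    rw [hRHS, Finset.sum_comm] at H
    have H2 : ∀ u : Fin n → Bool,
        (∑ x : Fin n → Bool, ∑ v : Fin n → Bool,
          (∏ i, dsbsPair p (u i, v i)) * (if f u = x then (1:ℝ) else 0) *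
            (if g v = y then (1:ℝ) else 0))
        = ∑ v : Fin n → Bool,
            (∏ i, dsbsPair p (u i, v i)) * (if g v = y then (1:ℝ) else 0) := by
      intro u
      rw [Finset.sum_comm]
      refine Finset.sum_congr rfl fun v _ => ?_
      have e : ∀ x : Fin n → Bool,
          (∏ i, dsbsPair p (u i, v i)) * (if f u = x then (1:ℝ) else 0) *
            (if g v = y then (1:ℝ) else 0)
          = (∏ i, dsbsPair p (u i, v i)) * (if g v = y then (1:ℝ) else 0) *
              (if f u = x then (1:ℝ) else 0) := fun x => mul_right_comm _ _ _
      simp_rw [e]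
      rw [← Finset.mul_sum]
      simp
    simp_rw [H2] at H
    rw [Finset.sum_comm] at H
    have H3 : ∀ v : Fin n → Bool,
        (∑ u : Fin n → Bool,
          (∏ i, dsbsPair p (u i, v i)) * (if g v = y then (1:ℝ) else 0))
        = (1/2:ℝ)^n * (if g v = y then (1:ℝ) else 0) := by
      intro v
      rw [← Finset.sum_mul]
      congr 1
      simp_rw [fun (u : Fin n → Bool) (i : Fin n) => dsbs_comm p (u i) (v i)]
      exact sum_prod_dsbs p v
    simp_rw [H3] at H
    rw [← Finset.mul_sum] at H
    exact mul_left_cancel₀ hpow_ne (H.trans (mul_one ((1/2:ℝ)^n)).symm)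
  have hfb : Function.Bijective f := sum_indic_one_bijective f hf1
  have hgb : Function.Bijective g := sum_indic_one_bijective g hg1
  refine ⟨hfb, hgb, ?_⟩
  intro x y
  have H := h (f x) (g y)
  simp_rw [hfb.injective.eq_iff, hgb.injective.eq_iff] at H
  simp only [mul_ite, mul_one, mul_zero, Finset.sum_ite_eq', Finset.mem_univ, if_true] at H
  rw [prod_dsbs, prod_dsbs] at H
  have hle1 : hammingDist x y ≤ n := by
    simpa using hammingDist_le_card_fintype (x := x) (y := y)
  have hle2 : hammingDist (f x) (g y) ≤ n := by
    simpa using hammingDist_le_card_fintype (x := f x) (y := g y)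
  exact (w_inj hp0 hp hle1 hle2 H).symm
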